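/- For any nonnegative integer N, integer k, and ν ∈ {0,1}, the generating function for partitions into parts at most 2N+ν with BG-rank equal to k is q^{2k²-k} / ((q²;q²)_{N+k} · (q²;q²)_{N+ν-k}). -/

import Mathlib

open Finset PowerSeries

/-- Number of cells of the Young diagram with (column - row) ≡ i (mod t). -/
def rCount (μ : YoungDiagram) (t : ℕ) (i : ZMod t) : ℕ :=
  (μ.cells.filter (fun c => ((c.2 : ZMod t) - (c.1 : ZMod t) = i))).card

/-- GBG-rank of a partition mod t: Σ_{i<t} r_i ω_t^i where ω_t = e^{2πi/t}. -/
noncomputable def GBG (μ : YoungDiagram) (t : ℕ) : ℂ :=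
  ∑ i ∈ Finset.range t, (rCount μ t (i : ZMod t) : ℂ) *
    Complex.exp (2 * (Real.pi : ℂ) * Complex.I * (i : ℂ) / (t : ℂ))

/-- Generating function (formal power series in q) counting Young diagrams of each size
satisfying the predicate P. -/
noncomputable def GF (P : YoungDiagram → Prop) : PowerSeries ℚ :=
  PowerSeries.mk fun n => (Nat.card {μ : YoungDiagram // μ.cells.card = n ∧ P μ} : ℚ)

/-- (q^s; q^s)_L  = ∏_{j=0}^{L-1} (1 - q^{s(j+1)}). -/
noncomputable def qp (s L : ℕ) : PowerSeries ℚ :=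
  ∏ j ∈ Finset.range L, (1 - (PowerSeries.X : PowerSeries ℚ) ^ (s * (j + 1)))

/-- 1/(q^s;q^s)_L with the convention that it is 0 for L < 0. -/
noncomputable def qpi (s : ℕ) (L : ℤ) : PowerSeries ℚ :=
  if 0 ≤ L then (qp s L.toNat)⁻¹ else 0

/-- Gaussian binomial coefficient [m choose n] in the variable q^s,
equal to 0 unless m ≥ n ≥ 0. -/
noncomputable def gbinom (s : ℕ) (m n : ℤ) : PowerSeries ℚ :=
  if 0 ≤ n ∧ n ≤ m then qp s m.toNat * (qp s n.toNat)⁻¹ * (qp s (m - n).toNat)⁻¹ else 0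

/-- (-q^s; q^{2s})_L = ∏_{j=0}^{L-1}(1 + q^{s(2j+1)}), with value 0 convention not needed
but defined as 0 for L < 0. -/
noncomputable def aqp (s : ℕ) (L : ℤ) : PowerSeries ℚ :=
  if 0 ≤ L then
    ∏ j ∈ Finset.range L.toNat, (1 + (PowerSeries.X : PowerSeries ℚ) ^ (s * (2 * j + 1)))
  else 0

/-- Multiplicity of the part m in the partition given by a Young diagram. -/
def mult (μ : YoungDiagram) (m : ℕ) : ℕ :=
  ((Finset.range (μ.colLen 0)).filter (fun j => μ.rowLen j = m)).card

/-- The Maya diagram / beta-set of a partition: the set {λ_j - j : j ≥ 1} ⊆ ℤ. -/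
def InS (μ : YoungDiagram) (x : ℤ) : Prop :=
  ∃ j : ℕ, (μ.rowLen j : ℤ) - (j + 1) = x

/-- `g` is the i-th component of the t-quotient of μ (Littlewood decomposition):
the Maya diagram of g is the i-th slice mod t of the Maya diagram of μ. -/
def QuotComp (t : ℕ) (i : ℕ) (μ g : YoungDiagram) : Prop :=
  ∀ m : ℤ, InS μ (t * m + i) ↔ InS g m

/-- μ is a t-core: its Young diagram has no rim hooks of length t, equivalently
its Maya diagram is closed under subtracting t. -/
def IsTCore (t : ℕ) (μ : YoungDiagram) : Prop :=
  ∀ x : ℤ, InS μ x → InS μ (x - t)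

/-- i-th component of the vector n⃗(μ,t):  r_i - r_{i+1} (indices mod t). -/
def nVec (μ : YoungDiagram) (t : ℕ) (i : ℕ) : ℤ :=
  (rCount μ t (i : ZMod t) : ℤ) - (rCount μ t ((i + 1 : ℕ) : ZMod t) : ℤ)

/-- `h` is the t-core of μ: h is a t-core with the same vector n⃗ as μ. -/
def TCoreOf (t : ℕ) (μ h : YoungDiagram) : Prop :=
  IsTCore t h ∧ ∀ i : ℕ, i < t → nVec h t i = nVec μ t i

/-!
Write `F_M(k)` for the generating function of partitions with largest part at most `M` and
BG-rank `k`. Deleting the first row of a partition whose largest part is exactly `M` leaves a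
partition with largest part at most `M` and `M` fewer cells; the deleted row contributes
`M mod 2` to the BG-rank and every remaining cell changes colour, so the BG-rank `k` becomes
`(M mod 2) - k`. Hence `F_{M+1}(k) = F_M(k) + q^{M+1} F_{M+1}(((M+1) mod 2) - k)`.
The product side obeys the same recurrence, because
`1/(q²;q²)_{L-1} = (1 - q^{2L})/(q²;q²)_L`, and it has the same values at `M = 0`.
As `k ↦ c - k` is an involution, applying the recurrence twice shows that it determines
`F_{M+1}` from `F_M`.
-/

namespace YoungDiagram

theorem rowLen_eq_of_forall_mem_iff {μ : YoungDiagram} {i L : ℕ}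
    (h : ∀ j, (i, j) ∈ μ ↔ j < L) : μ.rowLen i = L :=
  eq_of_forall_lt_iff fun j => by rw [← mem_iff_lt_rowLen, h]

theorem eq_bot_of_rowLen_zero {μ : YoungDiagram} (h : μ.rowLen 0 = 0) : μ = ⊥ :=
  SetLike.ext fun ⟨i, j⟩ => by
    refine ⟨fun hij => ?_, fun hij => absurd hij (notMem_bot _)⟩
    have h00 : (0, 0) ∈ μ := μ.up_left_mem (Nat.zero_le i) (Nat.zero_le j) hij
    rw [mem_iff_lt_rowLen, h] at h00
    exact absurd h00 (Nat.lt_irrefl 0)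

theorem rowLen_bot (i : ℕ) : (⊥ : YoungDiagram).rowLen i = 0 :=
  rowLen_eq_of_forall_mem_iff fun j => by simp [notMem_bot]

theorem succ_mul_succ_le_card_cells {μ : YoungDiagram} {i j : ℕ} (h : (i, j) ∈ μ) :
    (i + 1) * (j + 1) ≤ μ.cells.card := by
  rw [← card_range (i + 1), ← card_range (j + 1), ← card_product]
  refine card_le_card fun ⟨a, b⟩ hab => ?_
  rw [mem_product, mem_range, mem_range] at hab
  exact μ.up_left_mem (Nat.lt_succ_iff.mp hab.1) (Nat.lt_succ_iff.mp hab.2) h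

theorem finite_setOf_card_cells_eq (n : ℕ) : {μ : YoungDiagram | μ.cells.card = n}.Finite := by
  refine ((range n ×ˢ range n).powerset.finite_toSet.preimage
    (Function.Injective.injOn fun _ _ => YoungDiagram.ext)).subset fun μ hμ => ?_
  simp only [Set.mem_preimage, coe_powerset, Set.mem_powerset_iff, coe_subset]
  rintro ⟨i, j⟩ hij
  have := succ_mul_succ_le_card_cells hij
  rw [Set.mem_ofPred_eq] at hμ
  rw [mem_product, mem_range, mem_range]
  constructor <;> nlinarith

def succRow : ℕ × ℕ ↪ ℕ × ℕ :=
  Function.Embedding.prodMap ⟨_, Nat.succ_injective⟩ (Function.Embedding.refl ℕ)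

theorem disjoint_rowZero_map_succRow (M : ℕ) (s : Finset (ℕ × ℕ)) :
    Disjoint ({0} ×ˢ range M) (s.map succRow) := by
  simp [disjoint_left, succRow]

def consRow (M : ℕ) (μ : YoungDiagram) (h : μ.rowLen 0 ≤ M) : YoungDiagram where
  cells := {0} ×ˢ range M ∪ μ.cells.map succRow
  isLowerSet := by
    rintro ⟨_ | i₁, j₁⟩ ⟨_ | i₂, j₂⟩ ⟨hi, hj⟩ hmem <;> simp_all [succRow]
    · exact hj.trans_lt hmem
    · rw [mem_iff_lt_rowLen] at hmem
      exact hj.trans_lt (hmem.trans_le ((μ.rowLen_anti 0 _ (Nat.zero_le _)).trans h))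
    · exact μ.up_left_mem hi hj hmem

section consRow

variable {M : ℕ} {μ : YoungDiagram} {h : μ.rowLen 0 ≤ M}

@[simp]
theorem mem_consRow_zero {j : ℕ} : (0, j) ∈ consRow M μ h ↔ j < M := by
  simp [consRow, succRow]

@[simp]
theorem mem_consRow_succ {i j : ℕ} : (i + 1, j) ∈ consRow M μ h ↔ (i, j) ∈ μ := by
  simp [consRow, succRow]

theorem rowLen_consRow_zero : (consRow M μ h).rowLen 0 = M :=
  rowLen_eq_of_forall_mem_iff fun _ => mem_consRow_zero

theorem card_cells_consRow : (consRow M μ h).cells.card = M + μ.cells.card := by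
  rw [consRow, card_union_of_disjoint (disjoint_rowZero_map_succRow M _), card_product,
    card_singleton, card_range, card_map, one_mul]

end consRow

noncomputable def tail (μ : YoungDiagram) : YoungDiagram where
  cells := μ.cells.preimage succRow succRow.injective.injOn
  isLowerSet := by
    rintro ⟨i₁, j₁⟩ ⟨i₂, j₂⟩ ⟨hi, hj⟩ hmem
    simp_all only [mem_coe, mem_preimage]
    exact μ.up_left_mem (Nat.succ_le_succ hi) hj hmem

@[simp]
theorem mem_tail {μ : YoungDiagram} {i j : ℕ} : (i, j) ∈ μ.tail ↔ (i + 1, j) ∈ μ := by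
  simp [tail, succRow]

theorem rowLen_tail (μ : YoungDiagram) (i : ℕ) : μ.tail.rowLen i = μ.rowLen (i + 1) :=
  rowLen_eq_of_forall_mem_iff fun _ => by rw [mem_tail, mem_iff_lt_rowLen]

theorem rowLen_tail_zero_le (μ : YoungDiagram) : μ.tail.rowLen 0 ≤ μ.rowLen 0 :=
  (rowLen_tail μ 0).trans_le (μ.rowLen_anti 0 1 zero_le_one)

theorem tail_consRow {M : ℕ} {μ : YoungDiagram} (h : μ.rowLen 0 ≤ M) :
    (consRow M μ h).tail = μ :=
  SetLike.ext fun ⟨i, j⟩ => by rw [mem_tail, mem_consRow_succ]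

theorem eq_of_rowLen_zero_eq_of_tail_eq {μ ν : YoungDiagram} (h : μ.rowLen 0 = ν.rowLen 0)
    (ht : μ.tail = ν.tail) : μ = ν :=
  SetLike.ext fun
    | (0, j) => by rw [mem_iff_lt_rowLen, mem_iff_lt_rowLen, h]
    | (i + 1, j) => by rw [← mem_tail, ← mem_tail, ht]

theorem consRow_tail (μ : YoungDiagram) :
    consRow (μ.rowLen 0) μ.tail μ.rowLen_tail_zero_le = μ :=
  SetLike.ext fun
    | (0, j) => by rw [mem_consRow_zero, mem_iff_lt_rowLen]
    | (i + 1, j) => by rw [mem_consRow_succ, mem_tail]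

theorem card_cells_eq_rowLen_add_card_tail (μ : YoungDiagram) :
    μ.cells.card = μ.rowLen 0 + μ.tail.cells.card := by
  conv_lhs => rw [← consRow_tail μ]
  exact card_cells_consRow

end YoungDiagram

open YoungDiagram

theorem sum_range_neg_one_pow (M : ℕ) :
    ∑ j ∈ range M, (-1 : ℤ) ^ j = ((M % 2 : ℕ) : ℤ) := by
  induction M with
  | zero => rfl
  | succ M ih =>
    rw [sum_range_succ, ih]
    rcases Nat.even_or_odd M with hM | hM
    · rw [hM.neg_one_pow]
      have := Nat.even_iff.mp hM
      omega
    · rw [hM.neg_one_pow]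
      have := Nat.odd_iff.mp hM
      omega

def bgRank (μ : YoungDiagram) : ℤ := rCount μ 2 0 - rCount μ 2 1

theorem bgRank_eq_sum (μ : YoungDiagram) :
    bgRank μ = ∑ c ∈ μ.cells, (-1 : ℤ) ^ (c.1 + c.2) := by
  have hcell (c : ℕ × ℕ) : (-1 : ℤ) ^ (c.1 + c.2) =
      (if (c.2 : ZMod 2) - c.1 = 0 then 1 else 0) -
        (if (c.2 : ZMod 2) - c.1 = 1 then 1 else 0) := by
    rw [CharTwo.sub_eq_add (c.2 : ZMod 2), ← Nat.cast_add, add_comm c.2]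
    rcases Nat.even_or_odd (c.1 + c.2) with hc | hc
    · simp [hc.neg_one_pow, ZMod.natCast_eq_zero_iff_even.mpr hc]
    · simp [hc.neg_one_pow, ZMod.natCast_eq_one_iff_odd.mpr hc]
  simp only [hcell, sum_sub_distrib, sum_boole, bgRank, rCount]

theorem bgRank_bot : bgRank ⊥ = 0 := by
  simp [bgRank_eq_sum]

theorem bgRank_consRow {M : ℕ} {μ : YoungDiagram} (h : μ.rowLen 0 ≤ M) :
    bgRank (consRow M μ h) = ((M % 2 : ℕ) : ℤ) - bgRank μ := by
  have hshift (c : ℕ × ℕ) :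
      (-1 : ℤ) ^ ((succRow c).1 + (succRow c).2) = -(-1) ^ (c.1 + c.2) := by
    simp [succRow, pow_succ, add_right_comm]
  rw [bgRank_eq_sum, bgRank_eq_sum, consRow, sum_union (disjoint_rowZero_map_succRow M _),
    sum_product, sum_singleton, sum_map]
  simp only [hshift, sum_neg_distrib, zero_add, sum_range_neg_one_pow, sub_eq_add_neg]

theorem bgRank_tail (μ : YoungDiagram) :
    bgRank μ.tail = ((μ.rowLen 0 % 2 : ℕ) : ℤ) - bgRank μ := by
  have h := bgRank_consRow μ.rowLen_tail_zero_le
  rw [consRow_tail] at h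
  linarith

theorem coeff_GF (P : YoungDiagram → Prop) (n : ℕ) :
    coeff n (GF P) = ({μ | μ.cells.card = n ∧ P μ}.ncard : ℚ) := by
  rw [GF, coeff_mk]
  rfl

theorem GF_or {P Q : YoungDiagram → Prop} (h : ∀ μ, P μ → ¬ Q μ) :
    GF (fun μ => P μ ∨ Q μ) = GF P + GF Q := by
  ext n
  have hfin (R : YoungDiagram → Prop) : {μ | μ.cells.card = n ∧ R μ}.Finite :=
    (finite_setOf_card_cells_eq n).subset fun _ hμ => hμ.1
  rw [map_add, coeff_GF, coeff_GF, coeff_GF, ← Nat.cast_add,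
    ← Set.ncard_union_eq _ (hfin P) (hfin Q)]
  · congr 2
    ext μ
    simp only [Set.mem_ofPred_eq, Set.mem_union, and_or_left]
  · exact Set.disjoint_left.mpr fun μ hP hQ => h μ hP.2 hQ.2

theorem GF_eq_X_pow_mul_of_bijOn {P Q : YoungDiagram → Prop} {f : YoungDiagram → YoungDiagram}
    (M : ℕ) (hf : Set.BijOn f {μ | P μ} {ν | Q ν})
    (hcard : ∀ μ, P μ → μ.cells.card = M + (f μ).cells.card) :
    GF P = X ^ M * GF Q := by
  ext n
  rw [coeff_GF, coeff_X_pow_mul']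
  split_ifs with hn
  · rw [coeff_GF, ← (hf.injOn.mono fun _ hμ => hμ.2).ncard_image]
    congr 2
    ext ν
    constructor
    · rintro ⟨μ, ⟨hμn, hμ⟩, rfl⟩
      exact ⟨by have := hcard μ hμ; omega, hf.mapsTo hμ⟩
    · rintro ⟨hνn, hν⟩
      obtain ⟨μ, hμ, rfl⟩ := hf.surjOn hν
      exact ⟨μ, ⟨by have := hcard μ hμ; omega, hμ⟩, rfl⟩
  · have hempty : {μ | μ.cells.card = n ∧ P μ} = ∅ :=
      Set.eq_empty_of_forall_notMem fun μ ⟨hμn, hμ⟩ => by have := hcard μ hμ; omega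
    rw [hempty, Set.ncard_empty, Nat.cast_zero]

theorem GF_eq_bot_and (p : Prop) [Decidable p] :
    GF (fun μ => μ = ⊥ ∧ p) = if p then 1 else 0 := by
  ext n
  rw [coeff_GF]
  split_ifs with hp
  · simp only [hp, and_true, coeff_one]
    split_ifs with hn
    · have hbot : {μ : YoungDiagram | μ.cells.card = n ∧ μ = ⊥} = {⊥} := by
        ext μ
        constructor
        · exact fun h => h.2
        · rintro rfl
          exact ⟨by rw [cells_bot, card_empty, hn], rfl⟩
      rw [hbot, Set.ncard_singleton, Nat.cast_one]
    · have hempty : {μ : YoungDiagram | μ.cells.card = n ∧ μ = ⊥} = ∅ :=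
        Set.eq_empty_of_forall_notMem fun μ ⟨hμn, hμ⟩ =>
          hn (by rw [← hμn, hμ, cells_bot, card_empty])
      rw [hempty, Set.ncard_empty, Nat.cast_zero]
  · simp [hp]

theorem qpi_of_neg (s : ℕ) {L : ℤ} (hL : L < 0) : qpi s L = 0 :=
  if_neg hL.not_ge

theorem qpi_zero (s : ℕ) : qpi s 0 = 1 := by
  rw [qpi, if_pos le_rfl, Int.toNat_zero, qp, prod_range_zero, inv_one]

theorem qp_succ (s n : ℕ) : qp s (n + 1) = qp s n * (1 - X ^ (s * (n + 1))) :=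
  prod_range_succ _ _

theorem qpi_sub_one {s : ℕ} (hs : 0 < s) (L : ℤ) :
    qpi s (L - 1) = (1 - X ^ (s * L.toNat)) * qpi s L := by
  rcases lt_trichotomy L 0 with hL | rfl | hL
  · rw [qpi_of_neg s hL, qpi_of_neg s (by omega), mul_zero]
  · rw [qpi_of_neg s (by omega), Int.toNat_zero, mul_zero, pow_zero, sub_self, zero_mul]
  · obtain ⟨n, rfl⟩ : ∃ n : ℕ, L = n + 1 := ⟨(L - 1).toNat, by omega⟩
    have hunit : constantCoeff (1 - X ^ (s * (n + 1)) : PowerSeries ℚ) ≠ 0 := by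
      simp [zero_pow (Nat.mul_ne_zero hs.ne' n.succ_ne_zero)]
    rw [qpi, qpi, if_pos (by omega), if_pos (by omega), add_sub_cancel_right,
      show ((n : ℤ) + 1).toNat = n + 1 by omega, Int.toNat_natCast, qp_succ,
      PowerSeries.mul_inv_rev, ← mul_assoc, PowerSeries.mul_inv_cancel _ hunit, one_mul]

/-- Iterating the recurrence twice gives `(1 - X ^ (2 * M)) * (F₁ i - F₂ i) = 0`, and
`1 - X ^ (2 * M)` is a unit. -/
theorem PowerSeries.eq_of_involutive_recurrence {R ι : Type*} [CommRing R] {M : ℕ} (hM : 0 < M)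
    {σ : ι → ι} (hσ : Function.Involutive σ) {G F₁ F₂ : ι → PowerSeries R}
    (h₁ : ∀ i, F₁ i = G i + X ^ M * F₁ (σ i))
    (h₂ : ∀ i, F₂ i = G i + X ^ M * F₂ (σ i)) :
    F₁ = F₂ := by
  funext i
  have hunit : IsUnit (1 - X ^ M * X ^ M : PowerSeries R) := by
    rw [isUnit_iff_constantCoeff]
    simp [zero_pow hM.ne']
  have h₁' := h₁ (σ i)
  have h₂' := h₂ (σ i)
  rw [hσ i] at h₁' h₂'
  rw [← sub_eq_zero, ← hunit.mul_right_eq_zero]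
  linear_combination h₁ i - h₂ i + X ^ M * (h₁' - h₂')

noncomputable def bgRankSeries (M : ℕ) (k : ℤ) : PowerSeries ℚ :=
  GF (fun μ => μ.rowLen 0 ≤ M ∧ bgRank μ = k)

theorem bijOn_tail (M : ℕ) (k : ℤ) :
    Set.BijOn tail {μ | μ.rowLen 0 = M ∧ bgRank μ = k}
      {ν | ν.rowLen 0 ≤ M ∧ bgRank ν = ((M % 2 : ℕ) : ℤ) - k} := by
  refine ⟨?_, ?_, ?_⟩
  · rintro μ ⟨rfl, rfl⟩
    exact ⟨μ.rowLen_tail_zero_le, bgRank_tail μ⟩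
  · rintro μ₁ ⟨h₁, -⟩ μ₂ ⟨h₂, -⟩ ht
    exact eq_of_rowLen_zero_eq_of_tail_eq (h₁.trans h₂.symm) ht
  · rintro ν ⟨hν, hk⟩
    refine ⟨consRow M ν hν, ⟨rowLen_consRow_zero, ?_⟩, tail_consRow hν⟩
    rw [bgRank_consRow, hk, sub_sub_cancel]

theorem bgRankSeries_succ (M : ℕ) (k : ℤ) :
    bgRankSeries (M + 1) k =
      bgRankSeries M k +
        X ^ (M + 1) * bgRankSeries (M + 1) ((((M + 1) % 2 : ℕ) : ℤ) - k) := by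
  have hsplit : (fun μ : YoungDiagram => μ.rowLen 0 ≤ M + 1 ∧ bgRank μ = k) =
      fun μ => (μ.rowLen 0 ≤ M ∧ bgRank μ = k) ∨
        (μ.rowLen 0 = M + 1 ∧ bgRank μ = k) := by
    ext μ
    omega
  rw [bgRankSeries, hsplit, GF_or fun μ h₁ h₂ => by omega,
    GF_eq_X_pow_mul_of_bijOn (M + 1) (bijOn_tail (M + 1) k)
      fun μ hμ => hμ.1 ▸ card_cells_eq_rowLen_add_card_tail μ]
  rfl

theorem bgRankSeries_zero (k : ℤ) : bgRankSeries 0 k = if k = 0 then 1 else 0 := by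
  have hbot : (fun μ : YoungDiagram => μ.rowLen 0 ≤ 0 ∧ bgRank μ = k) =
      fun μ => μ = ⊥ ∧ k = 0 := by
    ext μ
    constructor
    · rintro ⟨h0, rfl⟩
      obtain rfl := eq_bot_of_rowLen_zero (Nat.le_zero.mp h0)
      exact ⟨rfl, bgRank_bot⟩
    · rintro ⟨rfl, rfl⟩
      exact ⟨(rowLen_bot 0).le, bgRank_bot⟩
  rw [bgRankSeries, hbot, GF_eq_bot_and]

noncomputable def bgRankProduct (M : ℕ) (k : ℤ) : PowerSeries ℚ :=
  X ^ (2 * k ^ 2 - k).toNat * qpi 2 ((M / 2 : ℕ) + k) * qpi 2 (((M + 1) / 2 : ℕ) - k)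

theorem bgRankProduct_zero (k : ℤ) : bgRankProduct 0 k = if k = 0 then 1 else 0 := by
  rcases lt_trichotomy k 0 with hk | rfl | hk
  · simp [bgRankProduct, qpi_of_neg 2 hk, hk.ne]
  · simp [bgRankProduct, qpi_zero]
  · simp [bgRankProduct, qpi_of_neg 2 (neg_neg_of_pos hk), hk.ne']

theorem X_pow_mul_X_pow_eq {k k' L : ℤ} {m : ℕ} (hL : 0 ≤ L)
    (h : 2 * k ^ 2 - k + 2 * L = m + (2 * k' ^ 2 - k')) :
    (X : PowerSeries ℚ) ^ (2 * k ^ 2 - k).toNat * X ^ (2 * L.toNat) =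
      X ^ m * X ^ (2 * k' ^ 2 - k').toNat := by
  rw [← pow_add, ← pow_add]
  congr 1
  have hk : 0 ≤ 2 * k ^ 2 - k := by nlinarith
  have hk' : 0 ≤ 2 * k' ^ 2 - k' := by nlinarith
  omega

theorem bgRankProduct_two_mul_add_one (N : ℕ) (k : ℤ) :
    bgRankProduct (2 * N + 1) k =
      bgRankProduct (2 * N) k + X ^ (2 * N + 1) * bgRankProduct (2 * N + 1) (1 - k) := by
  rw [bgRankProduct, bgRankProduct, bgRankProduct, show (2 * N + 1) / 2 = N by omega,
    show (2 * N) / 2 = N by omega, show (2 * N + 1 + 1) / 2 = N + 1 by omega]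
  push_cast
  rw [show (N : ℤ) + (1 - k) = N + 1 - k by ring, show (N : ℤ) + 1 - (1 - k) = N + k by ring]
  rcases lt_or_ge ((N : ℤ) + 1 - k) 0 with hL | hL
  · rw [qpi_of_neg 2 hL, qpi_of_neg 2 (by omega : (N : ℤ) - k < 0)]
    ring
  · have hstep := qpi_sub_one two_pos ((N : ℤ) + 1 - k)
    rw [show (N : ℤ) + 1 - k - 1 = N - k by ring] at hstep
    rw [hstep]
    linear_combination (qpi 2 (N + k) * qpi 2 (N + 1 - k)) *
      X_pow_mul_X_pow_eq (k := k) (k' := 1 - k) (m := 2 * N + 1) hL (by push_cast; ring)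

theorem bgRankProduct_two_mul_add_two (N : ℕ) (k : ℤ) :
    bgRankProduct (2 * N + 2) k =
      bgRankProduct (2 * N + 1) k + X ^ (2 * N + 2) * bgRankProduct (2 * N + 2) (-k) := by
  rw [bgRankProduct, bgRankProduct, bgRankProduct, show (2 * N + 2) / 2 = N + 1 by omega,
    show (2 * N + 1) / 2 = N by omega, show (2 * N + 2 + 1) / 2 = N + 1 by omega]
  push_cast
  rw [show (N : ℤ) + 1 + -k = N + 1 - k by ring, show (N : ℤ) + 1 - -k = N + 1 + k by ring]
  rcases lt_or_ge ((N : ℤ) + 1 + k) 0 with hL | hL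
  · rw [qpi_of_neg 2 hL, qpi_of_neg 2 (by omega : (N : ℤ) + k < 0)]
    ring
  · have hstep := qpi_sub_one two_pos ((N : ℤ) + 1 + k)
    rw [show (N : ℤ) + 1 + k - 1 = N + k by ring] at hstep
    rw [hstep]
    linear_combination (qpi 2 (N + 1 + k) * qpi 2 (N + 1 - k)) *
      X_pow_mul_X_pow_eq (k := k) (k' := -k) (m := 2 * N + 2) hL (by push_cast; ring)

theorem bgRankProduct_succ (M : ℕ) (k : ℤ) :
    bgRankProduct (M + 1) k =
      bgRankProduct M k +
        X ^ (M + 1) * bgRankProduct (M + 1) ((((M + 1) % 2 : ℕ) : ℤ) - k) := by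
  rcases Nat.even_or_odd' M with ⟨N, rfl | rfl⟩
  · rw [show (2 * N + 1) % 2 = 1 by omega, Nat.cast_one]
    exact bgRankProduct_two_mul_add_one N k
  · rw [show (2 * N + 1 + 1) % 2 = 0 by omega, Nat.cast_zero, zero_sub]
    exact bgRankProduct_two_mul_add_two N k

theorem bgRankSeries_eq_bgRankProduct (M : ℕ) : bgRankSeries M = bgRankProduct M := by
  induction M with
  | zero => exact funext fun k => (bgRankSeries_zero k).trans (bgRankProduct_zero k).symm
  | succ M ih =>
    refine PowerSeries.eq_of_involutive_recurrence M.succ_pos (fun k => sub_sub_cancel _ k)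
      (bgRankSeries_succ M) fun k => ?_
    rw [ih]
    exact bgRankProduct_succ M k

/-- generating function for partitions with parts ≤ 2N+ν and BG-rank k. -/
theorem genfn_bg_rank (N : ℕ) (k : ℤ) (ν : ℕ) (hν : ν ≤ 1) :
    GF (fun μ => μ.rowLen 0 ≤ 2 * N + ν ∧
        (rCount μ 2 (0 : ZMod 2) : ℤ) - (rCount μ 2 (1 : ZMod 2) : ℤ) = k) =
      (PowerSeries.X : PowerSeries ℚ) ^ ((2 * k ^ 2 - k).toNat) *
        qpi 2 ((N : ℤ) + k) * qpi 2 ((N : ℤ) + ν - k) := by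
  have h := congrFun (bgRankSeries_eq_bgRankProduct (2 * N + ν)) k
  rw [bgRankProduct, show (2 * N + ν) / 2 = N by omega,
    show (2 * N + ν + 1) / 2 = N + ν by omega] at h
  push_cast at h
  exact h
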